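/- arXiv:2308.09371 — 4 statements merged into one kernel-verified Lean document; each statement's English description precedes it below -/
import Mathlib

section
/- Let A be a commutative ring, F an n×n matrix over A with F² = F, M ⊆ A^n the image of the A-linear map given by F, and r_0, …, r_n ∈ A defined by det(I_n + X·F) = Σ_{i=0}^n r_i (1+X)^i in A[X]. Fix k with 0 ≤ k ≤ n, let t be the determinant of a principal (diagonal) k×k submatrix of F (obtained by selecting the same set of k rows and columns), and set s = r_k·t. Then the localized module M_s is a free module of rank k over the localization A_s (with the convention that over the trivial ring the zero module is free of every rank). -/
open Polynomial Matrix

/-!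
Write `q(y) = ∑ r_i y^i`, so that `det(1 + b F) = q(1 + b)` in every `A`-algebra. Since `F` is
idempotent, `(1 + aF)(1 + bF) = 1 + (a + b + ab)F`, whence `q(y) q(z) = q(yz)`: comparing
coefficients, the `r_i` are orthogonal idempotents. In `A_s` both `r_k` and `t` become units, so
`r_k = 1`, `r_i = 0` for `i ≠ k`, and `det(1 + XF) = (1 + X)^k`. As localization commutes with
images, `M_s` is the image of `F` over `A_s`.

Over a ring `R`, let `G` be idempotent with `det(1 + XG) = (1 + X)^k` and an invertible principal
`k × k` minor `G[d, d]`. With `P = G[·, d]` and `Q = G[d, d]⁻¹ G[d, ·]` we get `QP = 1`, so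
`E = PQ` is an idempotent with `det(1 + XE) = (1 + X)^k` and `EG = GE = E`. Then `H = G - E` is
idempotent with `EH = 0`, so `det(1 + XG) = det(1 + XE) det(1 + XH)` forces `det(1 + XH) = 1`; at
`X = -1` the idempotent `1 - H` is invertible, hence `H = 0`. Thus `G = PQ` and `P` maps `R^k`
isomorphically onto the image of `G`.
-/

section

variable {R M : Type*} [CommSemiring R] [Semiring M] [Algebra R M]

theorem IsIdempotentElem.one_add_smul_mul_one_add_smul {e : M} (he : IsIdempotentElem e)
    (a b : R) : (1 + a • e) * (1 + b • e) = 1 + (a + b + a * b) • e := by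
  simp only [mul_add, add_mul, one_mul, mul_one, smul_mul_smul_comm, he.eq, add_smul]
  abel

theorem one_add_smul_mul_one_add_smul_of_mul_eq_zero {e f : M} (h : e * f = 0) (a : R) :
    (1 + a • e) * (1 + a • f) = 1 + a • (e + f) := by
  simp only [mul_add, add_mul, one_mul, mul_one, smul_mul_smul_comm, h, smul_zero, add_zero,
    smul_add, add_assoc]

end

theorem Polynomial.coeff_sum_fin_C_mul_X_pow {R : Type*} [Semiring R] {n : ℕ} (a : Fin n → R)
    (m : Fin n) : (∑ i : Fin n, C (a i) * X ^ (i : ℕ)).coeff m = a m := by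
  simp [Fin.val_inj]

theorem map_eq_ite_of_mul_eq_ite {A B ι : Type*} [CommRing A] [CommRing B] [DecidableEq ι]
    {r : ι → A} (hr : ∀ i j, r i * r j = if i = j then r i else 0) (φ : A →+* B) {k : ι}
    (hk : IsUnit (φ (r k))) (i : ι) : φ (r i) = if i = k then 1 else 0 := by
  have hk1 : φ (r k) = 1 := (IsIdempotentElem.iff_eq_one_of_isUnit hk).1 <| by
    rw [IsIdempotentElem, ← map_mul, hr, if_pos rfl]
  split_ifs with hik
  · rw [hik, hk1]
  · rw [← mul_one (φ (r i)), ← hk1, ← map_mul, hr, if_neg hik, map_zero]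

namespace Matrix

section Submatrix

variable {R : Type*} [CommRing R] {ι κ : Type*} [Fintype ι] [Fintype κ] [DecidableEq κ]

theorem submatrix_mul_submatrix_of_isIdempotentElem {G : Matrix ι ι R} (hG : IsIdempotentElem G)
    {α β : Type*} (a : α → ι) (b : β → ι) :
    G.submatrix a id * G.submatrix id b = G.submatrix a b := by
  rw [← submatrix_mul _ _ _ _ _ Function.bijective_id, hG.eq]

theorem inv_submatrix_mul_submatrix_mul_submatrix {G : Matrix ι ι R} (hG : IsIdempotentElem G)
    (d : κ → ι) (hd : IsUnit (G.submatrix d d).det) :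
    (G.submatrix d d)⁻¹ * G.submatrix d id * G.submatrix id d = 1 := by
  rw [Matrix.mul_assoc, submatrix_mul_submatrix_of_isIdempotentElem hG, nonsing_inv_mul _ hd]

theorem range_mulVecLin_mul_eq_of_mul_eq_one {P : Matrix ι κ R} {Q : Matrix κ ι R}
    (h : Q * P = 1) : LinearMap.range (P * Q).mulVecLin = LinearMap.range P.mulVecLin := by
  rw [mulVecLin_mul, LinearMap.range_comp, LinearMap.range_eq_top.mpr, Submodule.map_top]
  exact fun v ↦ ⟨P *ᵥ v, by simp [mulVec_mulVec, h]⟩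

end Submatrix

section DetOneAddXSmul

variable {R : Type*} [CommRing R] {ι κ : Type*} [Fintype ι] [DecidableEq ι] [Fintype κ]
  [DecidableEq κ]

theorem aeval_det_one_add_X_smul {B : Type*} [CommRing B] [Algebra R B] (G : Matrix ι ι R)
    (b : B) :
    aeval b (1 + (X : R[X]) • G.map C).det = (1 + b • G.map (algebraMap R B)).det := by
  rw [AlgHom.map_det]
  congr 1
  ext i j
  simp [Matrix.one_apply, apply_ite]
  ring

theorem eq_zero_of_isIdempotentElem_of_det_one_add_X_smul_eq_one {H : Matrix ι ι R}
    (hH : IsIdempotentElem H) (hdet : (1 + (X : R[X]) • H.map C).det = 1) : H = 0 := by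
  have hunit : IsUnit (1 - H).det := by
    have h := aeval_det_one_add_X_smul H (-1 : R)
    rw [hdet, map_one, Algebra.algebraMap_self, RingHom.coe_id, Matrix.map_id, neg_one_smul,
      ← sub_eq_add_neg] at h
    rw [← h]
    exact isUnit_one
  exact sub_eq_self.mp
    ((IsIdempotentElem.iff_eq_one_of_isUnit ((isUnit_iff_isUnit_det _).2 hunit)).1 hH.one_sub)

theorem det_one_add_X_smul_mul_eq_pow {P : Matrix ι κ R} {Q : Matrix κ ι R} (h : Q * P = 1) :
    (1 + (X : R[X]) • (P * Q).map C).det = (1 + X) ^ Fintype.card κ := by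
  rw [Matrix.map_mul, ← Matrix.smul_mul, det_one_add_mul_comm, Matrix.mul_smul,
    ← Matrix.map_mul, h, Matrix.map_one _ (map_zero _) (map_one _)]
  nth_rw 1 [← one_smul R[X] (1 : Matrix κ κ R[X])]
  rw [← add_smul, det_smul, det_one, mul_one]

theorem eq_of_isIdempotentElem_of_det_one_add_X_smul_eq_pow {G E : Matrix ι ι R}
    (hG : IsIdempotentElem G) (hE : IsIdempotentElem E) (hEG : E * G = E) (hGE : G * E = E)
    {k : ℕ} (hGdet : (1 + (X : R[X]) • G.map C).det = (1 + X) ^ k)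
    (hEdet : (1 + (X : R[X]) • E.map C).det = (1 + X) ^ k) : G = E := by
  have hEH : E.map C * (G - E).map (C : R →+* R[X]) = 0 := by
    rw [← Matrix.map_mul, Matrix.mul_sub, hEG, hE.eq, sub_self, Matrix.map_zero _ (map_zero _)]
  have hsplit := congrArg det (one_add_smul_mul_one_add_smul_of_mul_eq_zero hEH (X : R[X]))
  rw [← Matrix.map_add _ (map_add C), add_sub_cancel, det_mul, hGdet, hEdet] at hsplit
  have hmonic : ((1 + X : R[X]) ^ k).Monic := by
    rw [add_comm, ← C_1]
    exact (monic_X_add_C 1).pow k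
  have hHdet := hmonic.isRegular.left (hsplit.trans (mul_one _).symm)
  exact sub_eq_zero.mp (eq_zero_of_isIdempotentElem_of_det_one_add_X_smul_eq_one
    (hE.sub hG hEG hGE) hHdet)

theorem eq_submatrix_mul_of_isIdempotentElem {G : Matrix ι ι R} (hG : IsIdempotentElem G)
    (hdet : (1 + (X : R[X]) • G.map C).det = (1 + X) ^ Fintype.card κ) (d : κ → ι)
    (hd : IsUnit (G.submatrix d d).det) :
    G = G.submatrix id d * ((G.submatrix d d)⁻¹ * G.submatrix d id) := by
  set P := G.submatrix id d
  set Q := (G.submatrix d d)⁻¹ * G.submatrix d id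
  have hQP : Q * P = 1 := inv_submatrix_mul_submatrix_mul_submatrix hG d hd
  have hGP : G * P = P := by
    simpa using submatrix_mul_submatrix_of_isIdempotentElem hG id d
  have hQG : Q * G = Q := by
    rw [Matrix.mul_assoc]
    simpa using congrArg ((G.submatrix d d)⁻¹ * ·)
      (submatrix_mul_submatrix_of_isIdempotentElem hG d id)
  refine eq_of_isIdempotentElem_of_det_one_add_X_smul_eq_pow hG ?_ ?_ ?_ hdet
    (det_one_add_X_smul_mul_eq_pow hQP)
  · rw [IsIdempotentElem, Matrix.mul_assoc, ← Matrix.mul_assoc Q, hQP, Matrix.one_mul]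
  · rw [Matrix.mul_assoc, hQG]
  · rw [← Matrix.mul_assoc, hGP]

theorem nonempty_basis_range_mulVecLin_of_isIdempotentElem {G : Matrix ι ι R}
    (hG : IsIdempotentElem G)
    (hdet : (1 + (X : R[X]) • G.map C).det = (1 + X) ^ Fintype.card κ) (d : κ → ι)
    (hd : IsUnit (G.submatrix d d).det) :
    Nonempty (Module.Basis κ R (LinearMap.range G.mulVecLin)) := by
  set P := G.submatrix id d
  set Q := (G.submatrix d d)⁻¹ * G.submatrix d id
  have hQP : Q * P = 1 := inv_submatrix_mul_submatrix_mul_submatrix hG d hd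
  have hrange : LinearMap.range G.mulVecLin = LinearMap.range P.mulVecLin := by
    rw [← range_mulVecLin_mul_eq_of_mul_eq_one hQP,
      ← eq_submatrix_mul_of_isIdempotentElem hG hdet d hd]
  exact ⟨(Pi.basisFun R κ).map ((LinearEquiv.ofLeftInverse (g := Q.mulVecLin)
    fun v ↦ by simp [mulVec_mulVec, hQP]).trans (LinearEquiv.ofEq _ _ hrange.symm))⟩

end DetOneAddXSmul

section

variable {A : Type*} [CommRing A] {ι : Type*} [Fintype ι] (S : Submonoid A)

instance : IsLocalizedModule S ((Algebra.linearMap A (Localization S)).compLeft ι) :=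
  IsLocalizedModule.pi S fun _ ↦ Algebra.linearMap A (Localization S)

theorem map_compLeft_mulVecLin (F : Matrix ι ι A) :
    IsLocalizedModule.map S ((Algebra.linearMap A (Localization S)).compLeft ι)
      ((Algebra.linearMap A (Localization S)).compLeft ι) F.mulVecLin =
      (F.map (algebraMap A (Localization S))).mulVecLin.restrictScalars A := by
  refine IsLocalizedModule.linearMap_ext S ((Algebra.linearMap A (Localization S)).compLeft ι)
    ((Algebra.linearMap A (Localization S)).compLeft ι) ?_
  rw [IsLocalizedModule.map_comp]
  refine LinearMap.ext fun v ↦ funext fun i ↦ ?_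
  simp [mulVec, dotProduct, map_sum]

noncomputable def localizedModuleRangeMulVecLinEquiv (F : Matrix ι ι A) :
    LocalizedModule S (LinearMap.range F.mulVecLin) ≃ₗ[Localization S]
      LinearMap.range (F.map (algebraMap A (Localization S))).mulVecLin :=
  ((IsLocalizedModule.iso S ((LinearMap.range F.mulVecLin).toLocalized' (Localization S) S
    ((Algebra.linearMap A (Localization S)).compLeft ι))).extendScalarsOfIsLocalization S
      (Localization S)).trans
    (LinearEquiv.ofEq _ _ (by
      rw [LinearMap.localized'_range_eq_range_localizedMap (Localization S) S
        ((Algebra.linearMap A (Localization S)).compLeft ι)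
        ((Algebra.linearMap A (Localization S)).compLeft ι), map_compLeft_mulVecLin]
      rfl))

end

end Matrix

section IdempotentMatrix

variable {A : Type*} [CommRing A] {n : ℕ} {F : Matrix (Fin n) (Fin n) A} {r : Fin (n + 1) → A}
  {B : Type*} [CommRing B] [Algebra A B]

theorem det_one_add_smul_map_eq_sum
    (hr : (1 + (X : A[X]) • F.map C).det = ∑ i : Fin (n + 1), C (r i) * (1 + X) ^ (i : ℕ))
    (b : B) : (1 + b • F.map (algebraMap A B)).det =
      ∑ i : Fin (n + 1), algebraMap A B (r i) * (1 + b) ^ (i : ℕ) := by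
  rw [← Matrix.aeval_det_one_add_X_smul, hr]
  simp [map_sum]

theorem sum_mul_sum_eq_sum_mul_pow_of_isIdempotentElem (hF : IsIdempotentElem F)
    (hr : (1 + (X : A[X]) • F.map C).det = ∑ i : Fin (n + 1), C (r i) * (1 + X) ^ (i : ℕ))
    (y z : B) :
    (∑ i : Fin (n + 1), algebraMap A B (r i) * y ^ (i : ℕ)) *
        ∑ i : Fin (n + 1), algebraMap A B (r i) * z ^ (i : ℕ) =
      ∑ i : Fin (n + 1), algebraMap A B (r i) * (y * z) ^ (i : ℕ) := by
  have key (b : B) : (1 + (b - 1) • F.map (algebraMap A B)).det =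
      ∑ i : Fin (n + 1), algebraMap A B (r i) * b ^ (i : ℕ) := by
    rw [det_one_add_smul_map_eq_sum hr, add_sub_cancel]
  have hFB : IsIdempotentElem (F.map (algebraMap A B)) := hF.map (algebraMap A B).mapMatrix
  rw [← key, ← key, ← key, ← det_mul, hFB.one_add_smul_mul_one_add_smul]
  congr 3
  ring

theorem mul_eq_ite_of_isIdempotentElem (hF : IsIdempotentElem F)
    (hr : (1 + (X : A[X]) • F.map C).det = ∑ i : Fin (n + 1), C (r i) * (1 + X) ^ (i : ℕ))
    (i j : Fin (n + 1)) : r i * r j = if i = j then r i else 0 := by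
  have h := congrArg (fun p : A[X][X] ↦ (p.coeff j).coeff i)
    (sum_mul_sum_eq_sum_mul_pow_of_isIdempotentElem hF hr (C X : A[X][X]) X)
  simp only [Polynomial.algebraMap_apply, algebraMap_eq, mul_pow, ← C_pow, ← C_mul,
    ← map_sum, ← mul_assoc] at h
  rw [coeff_C_mul, coeff_sum_fin_C_mul_X_pow (fun x ↦ C (r x)),
    coeff_sum_fin_C_mul_X_pow (fun x ↦ C (r x) * X ^ (x : ℕ)), coeff_mul_C,
    coeff_sum_fin_C_mul_X_pow, coeff_C_mul_X_pow] at h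
  rw [h]
  by_cases hij : i = j <;> simp [hij, Fin.val_inj]

theorem det_one_add_X_smul_map_eq_pow (hF : IsIdempotentElem F)
    (hr : (1 + (X : A[X]) • F.map C).det = ∑ i : Fin (n + 1), C (r i) * (1 + X) ^ (i : ℕ))
    {k : Fin (n + 1)} (hk : IsUnit (algebraMap A B (r k))) :
    (1 + (X : B[X]) • (F.map (algebraMap A B)).map C).det = (1 + X) ^ (k : ℕ) := by
  have hr' := map_eq_ite_of_mul_eq_ite (mul_eq_ite_of_isIdempotentElem hF hr) _ hk
  rw [Matrix.map_map, ← RingHom.coe_comp, ← Polynomial.algebraMap_eq,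
    ← IsScalarTower.algebraMap_eq, det_one_add_smul_map_eq_sum hr,
    Finset.sum_eq_single k (fun i _ hik ↦ by simp [hr', hik]) (by simp)]
  simp [hr']

end IdempotentMatrix

theorem localization_at_idempotent_mul_principal_minor_free_general
    {A : Type*} [CommRing A] {n : ℕ}
    (F : Matrix (Fin n) (Fin n) A) (hF : F * F = F)
    (r : Fin (n + 1) → A)
    (hr : (1 + (Polynomial.X : A[X]) • F.map Polynomial.C).det
        = ∑ i : Fin (n + 1), Polynomial.C (r i) * (1 + Polynomial.X) ^ (i : ℕ))
    (k : Fin (n + 1)) (d : Fin (k : ℕ) → Fin n)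
    (t : A) (ht : t = (F.submatrix d d).det)
    (s : A) (hs : s = r k * t) :
    Nonempty (Module.Basis (Fin (k : ℕ)) (Localization (Submonoid.powers s))
      (LocalizedModule (Submonoid.powers s) (LinearMap.range F.mulVecLin))) := by
  set L := Localization (Submonoid.powers s)
  have hunit : IsUnit (algebraMap A L (r k * t)) :=
    IsLocalization.map_units L (⟨r k * t, hs ▸ Submonoid.mem_powers s⟩ : Submonoid.powers s)
  obtain ⟨hrk, htu⟩ := IsUnit.mul_iff.mp ((map_mul (algebraMap A L) _ _) ▸ hunit)
  have hdet := det_one_add_X_smul_map_eq_pow hF hr hrk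
  rw [← Fintype.card_fin k] at hdet
  have hminor : IsUnit ((F.map (algebraMap A L)).submatrix d d).det := by
    rwa [submatrix_map, ← RingHom.mapMatrix_apply, ← RingHom.map_det, ← ht]
  obtain ⟨b⟩ := nonempty_basis_range_mulVecLin_of_isIdempotentElem
    (IsIdempotentElem.map (e := F) hF (algebraMap A L).mapMatrix) hdet d hminor
  exact ⟨b.map (localizedModuleRangeMulVecLinEquiv _ F).symm⟩

/-- **Theorem 3 (third part).** Let `F` be an idempotent `n × n` matrix over a commutative
ring `A`, `M ⊆ A^n` its image, and `r 0, …, r n` defined by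
`det(I + X • F) = ∑ i, r i • (1 + X) ^ i`.  If `t` is a principal `k × k` minor of `F`
and `s = r k * t`, then the localized module `M_s` is free of rank `k` over `A_s`. -/
theorem localization_at_idempotent_mul_principal_minor_free
    {A : Type*} [CommRing A] {n : ℕ}
    (F : Matrix (Fin n) (Fin n) A) (hF : F * F = F)
    (r : Fin (n + 1) → A)
    (hr : (1 + (Polynomial.X : A[X]) • F.map Polynomial.C).det
        = ∑ i : Fin (n + 1), Polynomial.C (r i) * (1 + Polynomial.X) ^ (i : ℕ))
    (k : Fin (n + 1)) (d : Fin (k : ℕ) → Fin n) (hd : Function.Injective d)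
    (t : A) (ht : t = (F.submatrix d d).det)
    (s : A) (hs : s = r k * t) :
    Nonempty (Module.Basis (Fin (k : ℕ)) (Localization (Submonoid.powers s))
      (LocalizedModule (Submonoid.powers s) (LinearMap.range F.mulVecLin))) :=
  localization_at_idempotent_mul_principal_minor_free_general F hF r hr k d t ht s hs
end

section
/- Let A be a commutative local ring with maximal ideal m, and let G be a q×m′ matrix over A. Then there exist an integer k, an invertible q×q matrix P and an invertible m′×m′ matrix Q over A such that P·G·Q is the block matrix with I_k in the upper left corner, zero blocks off the diagonal, and a (q−k)×(m′−k) block G′ in the lower right corner all of whose entries lie in the maximal ideal m. -/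
open Matrix IsLocalRing

/-!
An entry outside the maximal ideal of a local ring is a unit, so it can serve as a pivot:
multiplying by rank-one perturbations `1 + x yᵀ` of the identity (whose determinants
`1 + y ⬝ᵥ x` are units) clears its row and column, and two transpositions move it to the
diagonal right after the identity block already built, which therefore grows by one.
When no such entry is left, the remaining block lies in the maximal ideal.
-/

namespace Matrix

variable {R m n : Type*} [CommRing R] [Fintype m] [DecidableEq m] [Fintype n] [DecidableEq n]

def IsEquivalent (G H : Matrix m n R) : Prop :=
  ∃ (P : Matrix m m R) (Q : Matrix n n R), IsUnit P.det ∧ IsUnit Q.det ∧ P * G * Q = H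

namespace IsEquivalent

theorem refl (G : Matrix m n R) : G.IsEquivalent G :=
  ⟨1, 1, by simp, by simp, by simp⟩

theorem trans {G H K : Matrix m n R} : G.IsEquivalent H → H.IsEquivalent K → G.IsEquivalent K
  | ⟨P, Q, hP, hQ, hGH⟩, ⟨P', Q', hP', hQ', hHK⟩ =>
    ⟨P' * P, Q * Q', by rw [det_mul]; exact hP'.mul hP, by rw [det_mul]; exact hQ.mul hQ',
      by rw [← hHK, ← hGH]; simp only [Matrix.mul_assoc]⟩

end IsEquivalent

theorem isUnit_det_permMatrix (σ : Equiv.Perm m) : IsUnit (σ.permMatrix R).det := by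
  rw [det_permutation]
  exact (Equiv.Perm.sign σ).isUnit.map (Int.castRingHom R)

theorem isEquivalent_submatrix (G : Matrix m n R) (σ : Equiv.Perm m) (τ : Equiv.Perm n) :
    G.IsEquivalent (G.submatrix σ τ) :=
  ⟨σ.permMatrix R, τ⁻¹.permMatrix R, isUnit_det_permMatrix σ, isUnit_det_permMatrix τ⁻¹,
    by rw [PEquiv.toMatrix_toPEquiv_mul, PEquiv.mul_toMatrix_toPEquiv, submatrix_submatrix]; rfl⟩

theorem isUnit_det_one_add_vecMulVec {x y : m → R} (h : IsUnit (1 + y ⬝ᵥ x)) :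
    IsUnit (1 + vecMulVec x y).det := by
  rwa [vecMulVec_eq Unit, det_one_add_replicateCol_mul_replicateRow]

theorem exists_isEquivalent_pivot (G : Matrix m n R) {p : m} {s : n} {u : Rˣ} (hu : G p s = u) :
    ∃ H : Matrix m n R, G.IsEquivalent H ∧ ∀ i j,
      H i j = if i = p then (if j = s then 1 else 0) else G i j - G i s * ↑u⁻¹ * G p j := by
  -- `L` turns column `s` into the unit vector at `p`; `M` then clears row `p`.
  set x : m → R := fun i => ((if i = p then 1 else 0) - G i s) * ↑u⁻¹
  set L : Matrix m m R := 1 + vecMulVec x (Pi.single p 1)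
  have hLG : ∀ i j, (L * G) i j = G i j + x i * G p j := by
    intro i j
    simp [L, Matrix.add_mul, vecMulVec_mul, vecMulVec_apply]
  have hLGs : ∀ i, (L * G) i s = if i = p then 1 else 0 := by
    intro i
    rw [hLG, hu]
    simp only [x, mul_assoc, Units.inv_mul, mul_one, add_sub_cancel]
  set y : n → R := fun j => (if j = s then 1 else 0) - (L * G) p j
  set M : Matrix n n R := 1 + vecMulVec (Pi.single s 1) y
  have hLGM : ∀ i j, (L * G * M) i j = (L * G) i j + (L * G) i s * y j := by
    intro i j
    simp [M, Matrix.mul_add, mul_vecMulVec, vecMulVec_apply]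
  refine ⟨L * G * M, ⟨L, M, ?_, ?_, rfl⟩, fun i j => ?_⟩
  · apply isUnit_det_one_add_vecMulVec
    have : 1 + Pi.single p 1 ⬝ᵥ x = ↑u⁻¹ := by
      simp [x, hu, sub_mul]
    exact this ▸ Units.isUnit _
  · apply isUnit_det_one_add_vecMulVec
    simp [y, hLGs]
  · rw [hLGM, hLGs]
    by_cases hi : i = p
    · simp only [y, hi, if_true, one_mul, add_sub_cancel]
    · rw [if_neg hi, if_neg hi, hLG, zero_mul, add_zero]
      simp only [x, if_neg hi]
      ring

end Matrix

namespace Fin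

variable {q d : ℕ} {a b x : Fin q}

theorem swap_apply_of_lt (ha : d ≤ a) (hb : d ≤ b) (hx : (x : ℕ) < d) : Equiv.swap a b x = x :=
  Equiv.swap_apply_of_ne_of_ne (Fin.ne_of_lt (by omega)) (Fin.ne_of_lt (by omega))

theorem le_swap_apply (ha : d ≤ a) (hb : d ≤ b) (hx : d ≤ (x : ℕ)) :
    d ≤ (Equiv.swap a b x : ℕ) := by
  rw [Equiv.swap_apply_def]
  split_ifs <;> assumption

theorem lt_eq_swap_apply_iff (ha : d ≤ a) (hb : d ≤ b) {c : ℕ} (hc : c < d) :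
    c = (Equiv.swap a b x : ℕ) ↔ c = x := by
  by_cases hx : (x : ℕ) < d
  · rw [swap_apply_of_lt ha hb hx]
  · have := le_swap_apply ha hb (not_lt.mp hx)
    omega

end Fin

def Matrix.HasIdentityBlock {R : Type*} [Zero R] [One R] {q n : ℕ} (k : ℕ)
    (G : Matrix (Fin q) (Fin n) R) : Prop :=
  ∀ (i : Fin q) (j : Fin n), ((i : ℕ) < k ∨ (j : ℕ) < k) →
    G i j = if (i : ℕ) = (j : ℕ) then 1 else 0

namespace Matrix.HasIdentityBlock

variable {R : Type*} [CommRing R] {q n : ℕ}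

theorem submatrix_swap {d : ℕ} {H : Matrix (Fin q) (Fin n) R} (hH : H.HasIdentityBlock d)
    {i₀ : Fin q} {j₀ : Fin n} (hi₀ : d ≤ i₀) (hj₀ : d ≤ j₀)
    (hrow : ∀ j, H i₀ j = if j = j₀ then 1 else 0)
    (hcol : ∀ i, H i j₀ = if i = i₀ then 1 else 0) :
    (H.submatrix (Equiv.swap ⟨d, hi₀.trans_lt i₀.isLt⟩ i₀)
      (Equiv.swap ⟨d, hj₀.trans_lt j₀.isLt⟩ j₀)).HasIdentityBlock (d + 1) := by
  intro i j hij
  set e : Fin q := ⟨d, hi₀.trans_lt i₀.isLt⟩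
  set f : Fin n := ⟨d, hj₀.trans_lt j₀.isLt⟩
  have he : (e : ℕ) = d := rfl
  have hf : (f : ℕ) = d := rfl
  rw [submatrix_apply]
  by_cases hi : (i : ℕ) = d
  · rw [show i = e from Fin.ext hi, Equiv.swap_apply_left, hrow]
    exact if_congr (by rw [Equiv.swap_apply_eq_iff, Equiv.swap_apply_right, Fin.ext_iff]; omega)
      rfl rfl
  by_cases hj : (j : ℕ) = d
  · rw [show j = f from Fin.ext hj, Equiv.swap_apply_left, hcol]
    exact if_congr (by rw [Equiv.swap_apply_eq_iff, Equiv.swap_apply_right, Fin.ext_iff]) rfl rfl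
  rcases (by omega : (i : ℕ) < d ∨ (j : ℕ) < d) with hi' | hj'
  · rw [Fin.swap_apply_of_lt he.ge hi₀ hi', hH _ _ (Or.inl hi')]
    exact if_congr (Fin.lt_eq_swap_apply_iff hf.ge hj₀ hi') rfl rfl
  · rw [Fin.swap_apply_of_lt hf.ge hj₀ hj', hH _ _ (Or.inr hj')]
    exact if_congr (by rw [eq_comm, Fin.lt_eq_swap_apply_iff he.ge hi₀ hj', eq_comm]) rfl rfl

theorem exists_isEquivalent_succ {d : ℕ} {G : Matrix (Fin q) (Fin n) R}
    (hG : G.HasIdentityBlock d)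
    {i₀ : Fin q} {j₀ : Fin n} (hi₀ : d ≤ i₀) (hj₀ : d ≤ j₀) (hu : IsUnit (G i₀ j₀)) :
    ∃ H : Matrix (Fin q) (Fin n) R, G.IsEquivalent H ∧ H.HasIdentityBlock (d + 1) := by
  obtain ⟨u, hu⟩ := hu
  obtain ⟨H, hGH, hH⟩ := G.exists_isEquivalent_pivot hu.symm
  have hcol : ∀ i, H i j₀ = if i = i₀ then 1 else 0 := by
    intro i
    by_cases hi : i = i₀
    · rw [hH, if_pos hi, if_pos hi, if_pos rfl]
    · rw [hH, if_neg hi, if_neg hi, ← hu, mul_assoc, Units.inv_mul, mul_one, sub_self]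
  have hHd : H.HasIdentityBlock d := by
    intro i j hij
    by_cases hi : i = i₀
    · have hj : (j : ℕ) < d := by omega
      rw [hH, if_pos hi, if_neg (Fin.ne_of_lt (by omega)), if_neg (by omega)]
    have hcross : G i j₀ * ↑u⁻¹ * G i₀ j = 0 := by
      rcases hij with hi' | hj'
      · rw [hG i j₀ (Or.inl hi'), if_neg (by omega), zero_mul, zero_mul]
      · rw [hG i₀ j (Or.inr hj'), if_neg (by omega), mul_zero]
    rw [hH, if_neg hi, hcross, sub_zero, hG i j hij]
  exact ⟨_, hGH.trans (H.isEquivalent_submatrix _ _),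
    hHd.submatrix_swap hi₀ hj₀ (fun j => by rw [hH, if_pos rfl]) hcol⟩

theorem exists_isEquivalent_residuallyZero {A : Type*} [CommRing A] [IsLocalRing A] {d : ℕ}
    {G : Matrix (Fin q) (Fin n) A} (hG : G.HasIdentityBlock d) :
    ∃ (k : ℕ) (H : Matrix (Fin q) (Fin n) A), G.IsEquivalent H ∧ H.HasIdentityBlock k ∧
      ∀ (i : Fin q) (j : Fin n), k ≤ (i : ℕ) → k ≤ (j : ℕ) → H i j ∈ maximalIdeal A := by
  by_cases hres : ∀ (i : Fin q) (j : Fin n), d ≤ (i : ℕ) → d ≤ (j : ℕ) → G i j ∈ maximalIdeal A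
  · exact ⟨d, G, .refl G, hG, hres⟩
  push Not at hres
  obtain ⟨i₀, j₀, hi₀, hj₀, hunit⟩ := hres
  have hdq : d < q := hi₀.trans_lt i₀.isLt -- makes `q - d` decrease
  obtain ⟨H, hGH, hH⟩ := hG.exists_isEquivalent_succ hi₀ hj₀ (notMem_maximalIdeal.mp hunit)
  obtain ⟨k, K, hHK, hK⟩ := exists_isEquivalent_residuallyZero hH
  exact ⟨k, K, hGH.trans hHK, hK⟩
termination_by q - d

end Matrix.HasIdentityBlock

/-- **Local presentation lemma.** Over a commutative local ring `A`, any `q × m'`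
matrix `G` is equivalent to a block matrix with `I_k` in the upper left corner, zero
off-diagonal blocks, and a lower right block all of whose entries lie in the maximal
ideal. -/
theorem matrix_equiv_block_identity_and_residually_zero_of_isLocalRing
    {A : Type*} [CommRing A] [IsLocalRing A] {q m' : ℕ}
    (G : Matrix (Fin q) (Fin m') A) :
    ∃ (k : ℕ) (P : Matrix (Fin q) (Fin q) A) (Q : Matrix (Fin m') (Fin m') A),
      IsUnit P.det ∧ IsUnit Q.det ∧
      (∀ (i : Fin q) (j : Fin m'), ((i : ℕ) < k ∨ (j : ℕ) < k) →
        (P * G * Q) i j = if (i : ℕ) = (j : ℕ) then 1 else 0) ∧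
      (∀ (i : Fin q) (j : Fin m'), k ≤ (i : ℕ) → k ≤ (j : ℕ) →
        (P * G * Q) i j ∈ maximalIdeal A) := by
  have hG : G.HasIdentityBlock 0 := fun i j h => by omega
  obtain ⟨k, _, ⟨P, Q, hP, hQ, rfl⟩, hk, hres⟩ := hG.exists_isEquivalent_residuallyZero
  exact ⟨k, P, Q, hP, hQ, hk, hres⟩
end

section
/- Let A be a commutative local ring and F an n×n matrix over A with F² = F. Then there exists an integer k with 0 ≤ k ≤ n such that det(I_n + X·F) = (1+X)^k in A[X], and all (k+1)×(k+1) minors of F are zero. -/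
open Matrix Polynomial

/-!
An idempotent `F` over a local ring is the projection onto its image, a direct summand of `Aⁿ`
and hence a free module of some rank `k ≤ n`. Choosing a basis factors `F = M * N` through `Aᵏ`
with `N * M = 1`. Sylvester's identity `det (1 + M * N) = det (1 + N * M)` then gives
`det (1 + X • F) = det ((1 + X) • 1) = (1 + X) ^ k`, and every `(k+1) × (k+1)` minor of `F` is the
determinant of a product through `Aᵏ`, hence zero.
-/

namespace Matrix

variable {R : Type*} [CommRing R] {ι κ : Type*} [Fintype ι] [Fintype κ] [DecidableEq ι]

theorem det_mul_eq_zero_of_card_lt (h : Fintype.card κ < Fintype.card ι)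
    (M : Matrix ι κ R) (N : Matrix κ ι R) : (M * N).det = 0 := by
  let e : κ ⊕ Fin (Fintype.card ι - Fintype.card κ) ≃ ι :=
    Fintype.equivOfCardEq (by simp only [Fintype.card_sum, Fintype.card_fin]; omega)
  let M' := (fromCols M 0).submatrix id e.symm
  let N' := (fromRows N 0).submatrix e.symm id
  have hMN : M * N = M' * N' := by simp [M', N', fromCols_mul_fromRows]
  have hcol : ∀ i, M' i (e (.inr ⟨0, by omega⟩)) = 0 := fun i => by simp [M']
  rw [hMN, det_mul, det_eq_zero_of_column_eq_zero _ hcol, zero_mul]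

theorem det_one_add_smul_mul_of_mul_eq_one [DecidableEq κ] {M : Matrix ι κ R}
    {N : Matrix κ ι R} (hNM : N * M = 1) (c : R) :
    (1 + c • (M * N)).det = (1 + c) ^ Fintype.card κ := by
  rw [← smul_mul, det_one_add_mul_comm, Matrix.mul_smul, hNM,
    show (1 : Matrix κ κ R) + c • 1 = (1 + c) • 1 by rw [add_smul, one_smul], det_smul, det_one,
    mul_one]

theorem exists_mul_eq_one_and_mul_eq_of_isIdempotentElem [IsLocalRing R] {F : Matrix ι ι R}
    (hF : IsIdempotentElem F) :
    ∃ k ≤ Fintype.card ι, ∃ (M : Matrix ι (Fin k) R) (N : Matrix (Fin k) ι R),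
      N * M = 1 ∧ M * N = F := by
  let f := toLin' F
  let P := LinearMap.range f
  have hf : LinearMap.IsProj P f :=
    LinearMap.IsIdempotentElem.isProj_range f (hF.map toLinAlgEquiv')
  have hPf : hf.codRestrict ∘ₗ P.subtype = LinearMap.id :=
    LinearMap.ext hf.codRestrict_apply_cod
  have : Module.Projective R P := .of_split P.subtype hf.codRestrict hPf
  have : Module.Free R P := Module.free_of_flat_of_isLocalRing
  let b := Module.finBasis R P
  refine ⟨Module.finrank R P,
    (Submodule.finrank_le P).trans_eq (Module.finrank_fintype_fun_eq_card R),
    LinearMap.toMatrix b (Pi.basisFun R ι) P.subtype,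
    LinearMap.toMatrix (Pi.basisFun R ι) b hf.codRestrict, ?_, ?_⟩
  · rw [← LinearMap.toMatrix_comp, hPf, LinearMap.toMatrix_id]
  · rw [← LinearMap.toMatrix_comp]
    have : P.subtype ∘ₗ hf.codRestrict = f := LinearMap.ext hf.codRestrict_apply
    rw [this, LinearMap.toMatrix_eq_toMatrix', LinearMap.toMatrix'_toLin']

end Matrix

/-- **Proposition 2.1.** Over a commutative local ring `A`, for any idempotent `n × n`
matrix `F` there is an integer `0 ≤ k ≤ n` with `det(I + X • F) = (1 + X) ^ k`, and all
`(k+1) × (k+1)` minors of `F` vanish. -/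
theorem exists_det_one_add_smul_eq_pow_of_isLocalRing
    {A : Type*} [CommRing A] [IsLocalRing A] {n : ℕ}
    (F : Matrix (Fin n) (Fin n) A) (hF : F * F = F) :
    ∃ k ≤ n,
      (1 + (Polynomial.X : A[X]) • F.map Polynomial.C).det
          = (1 + Polynomial.X) ^ k ∧
      ∀ (ri ci : Fin (k + 1) → Fin n),
        Function.Injective ri → Function.Injective ci →
        (F.submatrix ri ci).det = 0 := by
  obtain ⟨k, hkn, M, N, hNM, rfl⟩ := exists_mul_eq_one_and_mul_eq_of_isIdempotentElem hF
  refine ⟨k, by simpa using hkn, ?_, fun ri ci _ _ => ?_⟩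
  · have hNM' : N.map C * M.map C = (1 : Matrix (Fin k) (Fin k) A[X]) := by
      rw [← Matrix.map_mul, hNM, Matrix.map_one _ C.map_zero C.map_one]
    rw [Matrix.map_mul, det_one_add_smul_mul_of_mul_eq_one hNM', Fintype.card_fin]
  · rw [submatrix_mul _ _ ri id ci Function.bijective_id]
    exact det_mul_eq_zero_of_card_lt (by simp) _ _
end

section
/- Let A be a commutative ring, F an n×n matrix over A with F² = F, M ⊆ A^n the image of F, and r_0, …, r_n ∈ A defined by det(I_n + X·F) = Σ_{i=0}^n r_i (1+X)^i in A[X]. Let s ∈ A and 0 ≤ h ≤ n. Then the localization M_P is a free A_P-module of rank h for every prime ideal P of A with s ∉ P if and only if the image of r_h in A_s equals 1, i.e., there exists an integer m with r_h·s^m = s^m in A. If moreover s is idempotent, this holds if and only if r_h·s = s. Finally, if (s_0, …, s_n) is a fundamental system of orthogonal idempotents of A such that for each h the localization M_P is free of rank h over A_P for every prime ideal P with s_h ∉ P, then s_h = r_h for h = 0, …, n. -/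
/-!
Over a local ring the image of the idempotent matrix `F` is a direct summand of a free module,
hence free, say of rank `k`, and so is its kernel; in a basis adapted to `im F ⊕ ker F` the
matrix `F` becomes `diag(1, …, 1, 0, …, 0)`, whence `det (1 + X F) = (1 + X) ^ k`. Localizing at a
prime `P` and comparing coefficients in the basis `(1 + X) ^ i` of `A[X]` shows that `r i` maps to
`1` in `A_P` if `i` is the rank of `M_P` and to `0` otherwise. Hence the `r i` are orthogonal
idempotents, and `M_P` is free of rank `h` exactly when `r h ∉ P`. For an idempotent `e`, asking
that `s ∉ P → e ∉ P` for every prime `P` says that `s` lies in the radical of `(e)`, i.e.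
`e * s ^ m = s ^ m` for some `m`, which means that `e` maps to `1` in `A_s`. For a complete
system `s'`, this gives `r k * s' k = s' k`, and orthogonality of the `r` then yields
`r k = r k * ∑ l, s' l = s' k`.
-/

open Polynomial Matrix

section Complement
variable {R M : Type*} [CommRing R] [AddCommGroup M] [Module R M] {p q : Submodule R M}

theorem Submodule.projective_of_isCompl [Module.Projective R M] (h : IsCompl p q) :
    Module.Projective R p :=
  .of_split p.subtype (p.projectionOnto q h) (p.projectionOnto_comp_subtype h)

theorem Submodule.finite_of_isCompl [Module.Finite R M] (h : IsCompl p q) : Module.Finite R p :=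
  .of_surjective _ (p.projectionOnto_surjective h)

theorem Submodule.free_of_isCompl [IsLocalRing R] [Module.Projective R M] [Module.Finite R M]
    (h : IsCompl p q) : Module.Free R p :=
  have := projective_of_isCompl h
  have := finite_of_isCompl h
  Module.free_of_flat_of_isLocalRing

namespace LinearMap

theorem toMatrix_prodEquivOfIsCompl_range_ker {f : Module.End R M}
    (hf : IsIdempotentElem f) {κ₁ κ₂ : Type*} [Fintype κ₁] [Fintype κ₂] [DecidableEq κ₁]
    [DecidableEq κ₂] (b : Module.Basis κ₁ R (range f)) (c : Module.Basis κ₂ R (ker f)) :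
    toMatrix ((b.prod c).map (Submodule.prodEquivOfIsCompl _ _ (IsIdempotentElem.isCompl hf)))
      ((b.prod c).map (Submodule.prodEquivOfIsCompl _ _ (IsIdempotentElem.isCompl hf))) f =
      fromBlocks 1 0 0 0 := by
  set e := Submodule.prodEquivOfIsCompl _ _ (IsIdempotentElem.isCompl hf)
  have hconj : e.symm.toLinearMap ∘ₗ f ∘ₗ e.toLinearMap = prodMap id 0 := by
    refine prod_ext (LinearMap.ext fun x ↦ ?_) (LinearMap.ext fun x ↦ ?_)
    · simp [e, (IsIdempotentElem.mem_range_iff hf).mp x.2]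
    · simp [e, mem_ker.mp x.2]
  rw [toMatrix_map_left, toMatrix_map_right, hconj, toMatrix_prodMap, toMatrix_id, map_zero]

end LinearMap

end Complement

theorem Matrix.charpolyRev_toMatrix_mulVecLin {R ι κ : Type*} [CommRing R] [Fintype ι]
    [DecidableEq ι] [Fintype κ] [DecidableEq κ] (v : Module.Basis κ R (ι → R)) (G : Matrix ι ι R) :
    (LinearMap.toMatrix v v G.mulVecLin).charpolyRev = G.charpolyRev := by
  rw [← reverse_charpoly, ← reverse_charpoly, LinearMap.charpoly_toMatrix, charpoly_mulVecLin]

theorem Matrix.charpolyRev_neg_fromBlocks_one_zero {R : Type*} [CommRing R] (k m : Type*)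
    [Fintype k] [Fintype m] [DecidableEq k] [DecidableEq m] :
    (-fromBlocks (1 : Matrix k k R) 0 0 (0 : Matrix m m R)).charpolyRev =
      (1 + X) ^ Fintype.card k := by
  have : 1 - (X : R[X]) • (-fromBlocks (1 : Matrix k k R) 0 0 (0 : Matrix m m R)).map C =
      fromBlocks ((1 + X : R[X]) • (1 : Matrix k k R[X])) 0 0 1 := by
    ext (i | i) (j | j) : 1
    · by_cases h : i = j <;> simp [h]
    all_goals simp [one_apply]
  rw [charpolyRev, this, det_fromBlocks_zero₂₁, det_smul, det_one, det_one, mul_one, mul_one]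

section IdempotentMatrix
variable {R ι : Type*} [CommRing R] [Fintype ι] {G : Matrix ι ι R}

theorem Matrix.isIdempotentElem_mulVecLin (hG : IsIdempotentElem G) :
    IsIdempotentElem G.mulVecLin := by
  rw [IsIdempotentElem, Module.End.mul_eq_comp, ← mulVecLin_mul, hG.eq]

variable [DecidableEq ι]

theorem Matrix.det_one_add_X_smul_eq_of_isIdempotentElem (hG : IsIdempotentElem G)
    {κ₁ κ₂ : Type*} [Fintype κ₁] [Fintype κ₂] [DecidableEq κ₁] [DecidableEq κ₂]
    (b : Module.Basis κ₁ R (LinearMap.range G.mulVecLin))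
    (c : Module.Basis κ₂ R (LinearMap.ker G.mulVecLin)) :
    (1 + (X : R[X]) • G.map C).det = (1 + X) ^ Fintype.card κ₁ := by
  have hf := isIdempotentElem_mulVecLin hG
  set v :=
    (b.prod c).map (Submodule.prodEquivOfIsCompl _ _ (LinearMap.IsIdempotentElem.isCompl hf))
  calc (1 + (X : R[X]) • G.map C).det = (-G).charpolyRev := by
        simp [charpolyRev, Matrix.map_neg]
    _ = (LinearMap.toMatrix v v (-G).mulVecLin).charpolyRev :=
        (charpolyRev_toMatrix_mulVecLin v _).symm
    _ = (1 + X) ^ Fintype.card κ₁ := by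
        rw [← toLin'_apply', map_neg, map_neg, toLin'_apply',
          LinearMap.toMatrix_prodEquivOfIsCompl_range_ker hf, charpolyRev_neg_fromBlocks_one_zero]

theorem Matrix.exists_basis_range_and_det_eq_of_isIdempotentElem [IsLocalRing R]
    (hG : IsIdempotentElem G) :
    ∃ k, Nonempty (Module.Basis (Fin k) R (LinearMap.range G.mulVecLin)) ∧
      (1 + (X : R[X]) • G.map C).det = (1 + X) ^ k := by
  have hc := LinearMap.IsIdempotentElem.isCompl (isIdempotentElem_mulVecLin hG)
  have := Submodule.free_of_isCompl hc
  have := Submodule.finite_of_isCompl hc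
  have := Submodule.free_of_isCompl hc.symm
  have := Submodule.finite_of_isCompl hc.symm
  refine ⟨_, ⟨Module.finBasis R _⟩, ?_⟩
  rw [det_one_add_X_smul_eq_of_isIdempotentElem hG (Module.finBasis R _)
    (Module.Free.chooseBasis R (LinearMap.ker G.mulVecLin)), Fintype.card_fin]

end IdempotentMatrix

section LocalizedRange
variable {A : Type*} [CommRing A] (S : Submonoid A) {ι : Type*} [Fintype ι]

instance IsLocalizedModule.compLeft_algebraLinearMap :
    IsLocalizedModule S ((Algebra.linearMap A (Localization S)).compLeft ι) :=
  IsLocalizedModule.pi S fun _ ↦ Algebra.linearMap A (Localization S)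

theorem Matrix.localizedMap_mulVecLin (F : Matrix ι ι A) :
    (IsLocalizedModule.map S ((Algebra.linearMap A (Localization S)).compLeft ι)
      ((Algebra.linearMap A (Localization S)).compLeft ι) F.mulVecLin).extendScalarsOfIsLocalization
        S (Localization S) = (F.map (algebraMap A (Localization S))).mulVecLin := by
  refine LinearMap.restrictScalars_injective A
    (IsLocalizedModule.linearMap_ext S ((Algebra.linearMap A (Localization S)).compLeft ι)
      ((Algebra.linearMap A (Localization S)).compLeft ι) ?_)
  ext x : 1
  funext i
  simp only [LinearMap.restrictScalars_extendScalarsOfIsLocalization, LinearMap.coe_comp,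
    Function.comp_apply, IsLocalizedModule.map_apply, mulVecBilin_apply, LinearMap.compLeft_apply,
    Algebra.linearMap_apply, RingHom.map_mulVec, LinearMap.coe_restrictScalars]
  rfl

noncomputable def Matrix.localizedModuleRangeEquiv (F : Matrix ι ι A) :
    LocalizedModule S (LinearMap.range F.mulVecLin) ≃ₗ[Localization S]
      LinearMap.range (F.map (algebraMap A (Localization S))).mulVecLin :=
  ((IsLocalizedModule.iso S ((LinearMap.range F.mulVecLin).toLocalized' (Localization S) S
    ((Algebra.linearMap A (Localization S)).compLeft ι))).extendScalarsOfIsLocalization S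
      (Localization S)).trans <| .ofEq _ _ <| by
    rw [LinearMap.localized'_range_eq_range_localizedMap (Localization S) S
      ((Algebra.linearMap A (Localization S)).compLeft ι)
      ((Algebra.linearMap A (Localization S)).compLeft ι), localizedMap_mulVecLin]

end LocalizedRange

theorem Matrix.det_one_add_X_smul_map {A B ι : Type*} [CommRing A] [CommRing B] [Fintype ι]
    [DecidableEq ι] (φ : A →+* B) (G : Matrix ι ι A) :
    (1 + (X : B[X]) • (G.map φ).map C).det = (1 + (X : A[X]) • G.map C).det.map φ := by
  rw [← coe_mapRingHom, RingHom.map_det]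
  congr 1
  ext i j
  by_cases h : i = j <;> simp [h]

theorem Polynomial.eq_ite_of_sum_C_mul_one_add_X_pow_eq {R : Type*} [CommRing R] {n k : ℕ}
    {a : Fin (n + 1) → R} (h : ∑ i, C (a i) * (1 + X) ^ (i : ℕ) = (1 + X) ^ k)
    (i : Fin (n + 1)) : a i = if (i : ℕ) = k then 1 else 0 := by
  -- substituting `X - 1` for `X` turns the basis `(1 + X) ^ i` into the monomials `X ^ i`
  have h' := congrArg (fun p ↦ coeff (aeval (X - 1 : R[X]) p) i) h
  simpa [finsetSum_coeff, coeff_X_pow, Fin.val_eq_val] using h'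

section RankIdempotents
variable {A : Type*} [CommRing A] {n : ℕ} {F : Matrix (Fin n) (Fin n) A} {r : Fin (n + 1) → A}

theorem exists_basis_range_map_and_apply_eq_ite {B : Type*} [CommRing B] [IsLocalRing B]
    (φ : A →+* B) (hF : IsIdempotentElem F)
    (hr : (1 + (X : A[X]) • F.map C).det = ∑ i, C (r i) * (1 + X) ^ (i : ℕ)) :
    ∃ k, Nonempty (Module.Basis (Fin k) B (LinearMap.range (F.map φ).mulVecLin)) ∧
      ∀ i, φ (r i) = if (i : ℕ) = k then 1 else 0 := by
  obtain ⟨k, hb, hdet⟩ := exists_basis_range_and_det_eq_of_isIdempotentElem (hF.map φ.mapMatrix)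
  refine ⟨k, hb, eq_ite_of_sum_C_mul_one_add_X_pow_eq ?_⟩
  rw [← hdet, RingHom.mapMatrix_apply, det_one_add_X_smul_map, hr]
  simp [Polynomial.map_sum]

theorem orthogonalIdempotents_of_det_eq (hF : IsIdempotentElem F)
    (hr : (1 + (X : A[X]) • F.map C).det = ∑ i, C (r i) * (1 + X) ^ (i : ℕ)) :
    OrthogonalIdempotents r := by
  refine OrthogonalIdempotents.iff_mul_eq.mpr fun i j ↦ sub_eq_zero.mp ?_
  refine eq_zero_of_localization _ fun J _ ↦ ?_
  obtain ⟨k, -, hk⟩ :=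
    exists_basis_range_map_and_apply_eq_ite (algebraMap A (Localization.AtPrime J)) hF hr
  simp only [map_sub, map_mul, hk, apply_ite (algebraMap A _), map_zero]
  split_ifs <;> simp_all [Fin.ext_iff]

theorem nonempty_basis_localizedModule_iff (hF : IsIdempotentElem F)
    (hr : (1 + (X : A[X]) • F.map C).det = ∑ i, C (r i) * (1 + X) ^ (i : ℕ))
    (P : Ideal A) [P.IsPrime] (h : Fin (n + 1)) :
    Nonempty (Module.Basis (Fin h) (Localization.AtPrime P)
      (LocalizedModule P.primeCompl (LinearMap.range F.mulVecLin))) ↔ r h ∉ P := by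
  obtain ⟨k, ⟨b⟩, hk⟩ :=
    exists_basis_range_map_and_apply_eq_ite (algebraMap A (Localization.AtPrime P)) hF hr
  let b' := b.map (localizedModuleRangeEquiv P.primeCompl F).symm
  rw [← Ideal.mem_primeCompl_iff,
    ← IsLocalization.AtPrime.isUnit_to_map_iff (Localization.AtPrime P) P, hk]
  split_ifs with hhk
  · exact iff_of_true ⟨b'.reindex (finCongr hhk.symm)⟩ isUnit_one
  · exact iff_of_false (fun ⟨c⟩ ↦ hhk (Fin.equiv_iff_eq.mp ⟨c.indexEquiv b'⟩)) not_isUnit_zero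

end RankIdempotents

theorem IsIdempotentElem.exists_mul_pow_eq_pow_iff_forall_isPrime {R : Type*} [CommRing R]
    {e t : R} (he : IsIdempotentElem e) :
    (∃ m, e * t ^ m = t ^ m) ↔ ∀ P : Ideal R, P.IsPrime → t ∉ P → e ∉ P := by
  constructor
  · rintro ⟨m, hm⟩ P hP htP heP
    exact htP (hP.mem_of_pow_mem m (hm ▸ P.mul_mem_right _ heP))
  · intro H
    have ht : t ∈ (Ideal.span {e}).radical := by
      rw [Ideal.radical_eq_sInf, Submodule.mem_sInf]
      rintro P ⟨hle, hP⟩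
      by_contra htP
      exact H P hP htP (hle (Ideal.mem_span_singleton_self e))
    obtain ⟨m, hm⟩ := Ideal.mem_radical_iff.mp ht
    obtain ⟨c, hc⟩ := Ideal.mem_span_singleton.mp hm
    exact ⟨m, by rw [hc, ← mul_assoc, he.eq]⟩

theorem IsIdempotentElem.exists_mul_pow_eq_pow_iff_mul_eq {R : Type*} [Monoid R] {a s : R}
    (hs : IsIdempotentElem s) : (∃ m, a * s ^ m = s ^ m) ↔ a * s = s := by
  refine ⟨fun ⟨m, hm⟩ ↦ ?_, fun h ↦ ⟨1, by rwa [pow_one]⟩⟩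
  cases m with
  | zero => rw [pow_zero, mul_one] at hm; rw [hm, one_mul]
  | succ m => rwa [hs.pow_succ_eq] at hm

theorem algebraMap_eq_one_iff_exists_mul_pow_eq {R L : Type*} [CommRing R] [CommRing L]
    [Algebra R L] {s : R} [IsLocalization (Submonoid.powers s) L] (a : R) :
    algebraMap R L a = 1 ↔ ∃ m, a * s ^ m = s ^ m := by
  rw [← map_one (algebraMap R L), IsLocalization.eq_iff_exists (Submonoid.powers s)]
  simp [Submonoid.mem_powers_iff, mul_comm]

theorem eq_of_sum_eq_one_of_pairwise_mul_eq_zero {ι R : Type*} [Fintype ι] [Semiring R]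
    {e f : ι → R} (he : ∑ i, e i = 1) (hf : Pairwise (f · * f · = 0))
    (hfe : ∀ i, f i * e i = e i) (i : ι) : f i = e i :=
  calc f i = f i * ∑ j, e j := by rw [he, mul_one]
    _ = f i * e i := by
      rw [Finset.mul_sum, Finset.sum_eq_single i (fun j _ hji ↦ by
        rw [← hfe j, ← mul_assoc, hf hji.symm, zero_mul]) (by simp)]
    _ = e i := hfe i

/-- **Proposition 2.6.** Let `F` be an idempotent `n × n` matrix over a commutative ring
`A` with image `M ⊆ A^n`, and `r 0, …, r n` defined by
`det(I + X • F) = ∑ i, r i • (1 + X) ^ i`.  For `s ∈ A` and `0 ≤ h ≤ n` : the localized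
module `M_P` is free of rank `h` for every prime `P` avoiding `s` iff the image of
`r h` in `A_s` is `1`, iff `r h * s ^ m = s ^ m` for some `m`; if `s` is idempotent
this means `r h * s = s`; and any fundamental system of orthogonal idempotents
`s 0, …, s n` with the corresponding rank property must equal `r 0, …, r n`. -/
theorem localization_rank_iff_idempotent_eq_one_in_localization
    {A : Type*} [CommRing A] {n : ℕ}
    (F : Matrix (Fin n) (Fin n) A) (hF : F * F = F)
    (r : Fin (n + 1) → A)
    (hr : (1 + (Polynomial.X : A[X]) • F.map Polynomial.C).det
        = ∑ i : Fin (n + 1), Polynomial.C (r i) * (1 + Polynomial.X) ^ (i : ℕ))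
    (s : A) (h : Fin (n + 1)) :
    ((∀ (P : Ideal A) (hP : P.IsPrime), s ∉ P →
        Nonempty (Module.Basis (Fin (h : ℕ)) (Localization.AtPrime P)
          (LocalizedModule P.primeCompl (LinearMap.range F.mulVecLin)))) ↔
      algebraMap A (Localization (Submonoid.powers s)) (r h) = 1) ∧
    (algebraMap A (Localization (Submonoid.powers s)) (r h) = 1 ↔
      ∃ m : ℕ, r h * s ^ m = s ^ m) ∧
    (IsIdempotentElem s →
      ((∀ (P : Ideal A) (hP : P.IsPrime), s ∉ P →
        Nonempty (Module.Basis (Fin (h : ℕ)) (Localization.AtPrime P)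
          (LocalizedModule P.primeCompl (LinearMap.range F.mulVecLin)))) ↔
        r h * s = s)) ∧
    (∀ s' : Fin (n + 1) → A,
      (∑ k : Fin (n + 1), s' k) = 1 →
      (∀ k l : Fin (n + 1), k ≠ l → s' k * s' l = 0) →
      (∀ (k : Fin (n + 1)) (P : Ideal A) (hP : P.IsPrime), s' k ∉ P →
        Nonempty (Module.Basis (Fin (k : ℕ)) (Localization.AtPrime P)
          (LocalizedModule P.primeCompl (LinearMap.range F.mulVecLin)))) →
      ∀ k : Fin (n + 1), s' k = r k) := by
  have hr' := orthogonalIdempotents_of_det_eq hF hr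
  have hfree (t : A) (k : Fin (n + 1)) :
      (∀ (P : Ideal A) [P.IsPrime], t ∉ P →
        Nonempty (Module.Basis (Fin (k : ℕ)) (Localization.AtPrime P)
          (LocalizedModule P.primeCompl (LinearMap.range F.mulVecLin)))) ↔
        ∃ m, r k * t ^ m = t ^ m := by
    rw [(hr'.idem k).exists_mul_pow_eq_pow_iff_forall_isPrime]
    exact forall₂_congr fun P _ ↦ by rw [nonempty_basis_localizedModule_iff hF hr]
  have hlocal :=
    algebraMap_eq_one_iff_exists_mul_pow_eq (L := Localization (Submonoid.powers s)) (s := s) (r h)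
  refine ⟨(hfree s h).trans hlocal.symm, hlocal,
    fun hs ↦ (hfree s h).trans hs.exists_mul_pow_eq_pow_iff_mul_eq,
    fun s' hsum hortho hs' ↦ ?_⟩
  have hs'idem := (CompleteOrthogonalIdempotents.iff_ortho_complete.mpr
    ⟨fun k l hkl ↦ hortho k l hkl, hsum⟩).idem
  refine fun k ↦ (eq_of_sum_eq_one_of_pairwise_mul_eq_zero hsum hr'.ortho (fun l ↦ ?_) k).symm
  exact (hs'idem l).exists_mul_pow_eq_pow_iff_mul_eq.mp ((hfree _ l).mp (hs' l))
end
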